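/- arXiv:1810.03819 — 3 statements merged into one kernel-verified Lean document; each statement's English description precedes it below -/
import Mathlib

section
/- Let Q be a J×K binary matrix. The map from attribute profiles to ideal response vectors, sending α ∈ {0,1}^K to the vector (1(α ⪰ q_j))_{j=1,...,J} ∈ {0,1}^J (where α ⪰ q_j means α_k ≥ q_{j,k} for all k), is injective if and only if Q is complete, i.e., every standard basis vector e_k ∈ {0,1}^K (k = 1,...,K) appears as a row of Q. -/
/-!
Ordered coordinatewise, `Fin K → Bool` is an atomistic lattice whose atoms are the `e_k`, and
`α ⪰ q` is `q ≤ α`. An element of an atomistic lattice is determined by the atoms below it, so a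
family of rows containing every atom separates points. Conversely, if an atom `c` is not a row,
then every row below `c` is `⊥`, so `c` and `⊥` have the same ideal responses.
-/

open Function

section Atomistic

variable {α ι : Type*} [PartialOrder α] [OrderBot α]

def idealResponse (Q : ι → α) (a : α) : ι → Prop := fun j => Q j ≤ a

theorem idealResponse_eq_idealResponse_bot {Q : ι → α} {c : α} (hc : IsAtom c)
    (hQ : c ∉ Set.range Q) : idealResponse Q c = idealResponse Q ⊥ := by
  funext j
  rw [idealResponse, idealResponse, hc.le_iff, le_bot_iff, or_iff_left fun hj => hQ ⟨j, hj⟩]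

theorem injective_idealResponse_iff [IsAtomistic α] (Q : ι → α) :
    Injective (idealResponse Q) ↔ {c | IsAtom c} ⊆ Set.range Q := by
  refine ⟨fun hinj c hc => ?_, fun hQ a b hab => ?_⟩
  · by_contra hQ
    exact hc.1 (hinj (idealResponse_eq_idealResponse_bot hc hQ))
  · refine eq_iff_atom_le_iff.2 fun c hc => ?_
    obtain ⟨j, rfl⟩ := hQ hc
    exact iff_of_eq (congrFun hab j)

end Atomistic

theorem Pi.setOf_isAtom_bool {κ : Type*} [DecidableEq κ] :
    {f : κ → Bool | IsAtom f} = Set.range fun k k' => decide (k' = k) := by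
  ext f
  simp only [Set.mem_ofPred_eq, Pi.isAtom_iff, isAtom_iff_eq_top, Set.mem_range, funext_iff]
  refine exists_congr fun k => ⟨fun ⟨hk, hne⟩ k' => ?_, fun hf => ⟨?_, fun k' hk' => ?_⟩⟩
  · by_cases h : k' = k
    · simp_all
    · simp [h, hne k' h]
  · simpa using hf k
  · simpa [hk'] using hf k'

/-- The ideal-response map of the DINA model is injective iff the Q-matrix is
complete, i.e. every standard basis vector appears as a row of Q. -/
theorem dina_ideal_response_injective_iff_complete
    (J K : ℕ) (Q : Fin J → Fin K → Bool) :
    Function.Injective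
      (fun (α : Fin K → Bool) (j : Fin J) =>
        decide (∀ k, Q j k = true → α k = true))
    ↔ ∀ k : Fin K, ∃ j : Fin J, ∀ k' : Fin K, Q j k' = decide (k' = k) := by
  have hresp : Injective (fun (α : Fin K → Bool) (j : Fin J) =>
        decide (∀ k, Q j k = true → α k = true)) ↔ Injective (idealResponse Q) :=
    forall₂_congr fun a b => imp_congr_left <| by
      simp only [funext_iff, idealResponse, decide_eq_decide, eq_iff_iff, Pi.le_def,
        Bool.le_iff_imp]
  rw [hresp, injective_idealResponse_iff, Pi.setOf_isAtom_bool, Set.range_subset_iff]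
  simp only [Set.mem_range, funext_iff]
end

section
/- Verification of the alternative-parameter construction for a two-item block: let θ₁₀, θ₁₁, θ₂₀, θ₂₁ be real numbers and p₀, p₁ > 0 (playing the roles of θ_{i,(0,α')}, θ_{i,(1,α')}, p_{(0,α')}, p_{(1,α')}). Choose θ̄₁₀ and θ̄₂₀ generic (so that all denominators below are nonzero), and define θ̄₁₁ = θ₁₀ + (θ₁₁ − θ₁₀)(θ₂₁ − θ̄₂₀)p₁ / [(θ₂₀ − θ̄₂₀)p₀ + (θ₂₁ − θ̄₂₀)p₁], θ̄₂₁ = θ₂₀ + (θ₂₁ − θ₂₀)(θ₁₁ − θ̄₁₀)p₁ / [(θ₁₀ − θ̄₁₀)p₀ + (θ₁₁ − θ̄₁₀)p₁], p̄₁ = [(θ₂₀ − θ̄₂₀)p₀ + (θ₂₁ − θ̄₂₀)p₁]/(θ̄₂₁ − θ̄₂₀), p̄₀ = p₀ + p₁ − p̄₁. Then the four moment equations hold: p₀ + p₁ = p̄₀ + p̄₁; θ₁₀p₀ + θ₁₁p₁ = θ̄₁₀p̄₀ + θ̄₁₁p̄₁; θ₂₀p₀ + θ₂₁p₁ = θ̄₂₀p̄₀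 + θ̄₂₁p̄₁; and θ₁₀θ₂₀p₀ + θ₁₁θ₂₁p₁ = θ̄₁₀θ̄₂₀p̄₀ + θ̄₁₁θ̄₂₁p̄₁. -/
/-!
Measure both items from the barred base atom `(θb10, θb20)`. Given equal total mass, the four
moment equations say that the centered moments `a = Σ (θ1 - θb10) p`, `b = Σ (θ2 - θb20) p` and
`c = Σ (θ1 - θb10) (θ2 - θb20) p` are carried by the second barred atom alone:
`x q = a`, `y q = b`, `x y q = c` with `x = θb11 - θb10`, `y = θb21 - θb20`, `q = pb1`.
The construction is exactly the solution `x = c / b`, `y = c / a`, `q = a b / c`: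
`θb11` is the mean of item 1 under the weights `(θ2 - θb20) p`, and symmetrically for `θb21`.
-/

theorem moments_eq_of_centered_moments_eq
    {θ10 θ11 θ20 θ21 θb10 θb20 θb11 θb21 p0 p1 pb0 pb1 : ℝ}
    (hmass : p0 + p1 = pb0 + pb1)
    (h1 : (θ10 - θb10) * p0 + (θ11 - θb10) * p1 = (θb11 - θb10) * pb1)
    (h2 : (θ20 - θb20) * p0 + (θ21 - θb20) * p1 = (θb21 - θb20) * pb1)
    (h12 : (θ10 - θb10) * (θ20 - θb20) * p0 + (θ11 - θb10) * (θ21 - θb20) * p1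
      = (θb11 - θb10) * (θb21 - θb20) * pb1) :
    θ10 * p0 + θ11 * p1 = θb10 * pb0 + θb11 * pb1
    ∧ θ20 * p0 + θ21 * p1 = θb20 * pb0 + θb21 * pb1
    ∧ θ10 * θ20 * p0 + θ11 * θ21 * p1 = θb10 * θb20 * pb0 + θb11 * θb21 * pb1 :=
  ⟨by linear_combination h1 + θb10 * hmass,
   by linear_combination h2 + θb20 * hmass,
   by linear_combination h12 + θb20 * h1 + θb10 * h2 + θb10 * θb20 * hmass⟩

theorem weighted_mean_sub_eq_div {u0 u1 v0 v1 β γ p0 p1 : ℝ}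
    (hD : (v0 - γ) * p0 + (v1 - γ) * p1 ≠ 0) :
    u0 + (u1 - u0) * (v1 - γ) * p1 / ((v0 - γ) * p0 + (v1 - γ) * p1) - β
      = ((u0 - β) * (v0 - γ) * p0 + (u1 - β) * (v1 - γ) * p1)
        / ((v0 - γ) * p0 + (v1 - γ) * p1) := by
  field_simp
  ring

theorem two_item_block_alternative_parameters_general
    (θ10 θ11 θ20 θ21 θb10 θb20 θb11 θb21 p0 p1 pb0 pb1 : ℝ)
    (hden2 : (θ20 - θb20) * p0 + (θ21 - θb20) * p1 ≠ 0)
    (hden1 : (θ10 - θb10) * p0 + (θ11 - θb10) * p1 ≠ 0)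
    (hden3 : θb21 ≠ θb20)
    (hθb11 : θb11 = θ10 + (θ11 - θ10) * (θ21 - θb20) * p1 /
        ((θ20 - θb20) * p0 + (θ21 - θb20) * p1))
    (hθb21 : θb21 = θ20 + (θ21 - θ20) * (θ11 - θb10) * p1 /
        ((θ10 - θb10) * p0 + (θ11 - θb10) * p1))
    (hpb1 : pb1 = ((θ20 - θb20) * p0 + (θ21 - θb20) * p1) / (θb21 - θb20))
    (hpb0 : pb0 = p0 + p1 - pb1) :
    p0 + p1 = pb0 + pb1
    ∧ θ10 * p0 + θ11 * p1 = θb10 * pb0 + θb11 * pb1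
    ∧ θ20 * p0 + θ21 * p1 = θb20 * pb0 + θb21 * pb1
    ∧ θ10 * θ20 * p0 + θ11 * θ21 * p1 = θb10 * θb20 * pb0 + θb11 * θb21 * pb1 := by
  set a := (θ10 - θb10) * p0 + (θ11 - θb10) * p1
  set b := (θ20 - θb20) * p0 + (θ21 - θb20) * p1
  set c := (θ10 - θb10) * (θ20 - θb20) * p0 + (θ11 - θb10) * (θ21 - θb20) * p1 with hc_def
  have hx : θb11 - θb10 = c / b := by rw [hθb11, weighted_mean_sub_eq_div hden2]
  have hy : θb21 - θb20 = c / a := by rw [hθb21, weighted_mean_sub_eq_div hden1, hc_def]; ring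
  have hc : c ≠ 0 := by
    have := sub_ne_zero.mpr hden3
    rw [hy] at this
    exact left_ne_zero_of_mul this
  have hq : pb1 = a * b / c := by rw [hpb1, hy]; field_simp
  have hmass : p0 + p1 = pb0 + pb1 := by rw [hpb0]; ring
  have h1 : a = (θb11 - θb10) * pb1 := by rw [hx, hq]; field_simp
  have h2 : b = (θb21 - θb20) * pb1 := by rw [hy, hq]; field_simp
  have h12 : c = (θb11 - θb10) * (θb21 - θb20) * pb1 := by rw [hx, hy, hq]; field_simp
  exact ⟨hmass, moments_eq_of_centered_moments_eq hmass h1 h2 h12⟩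

/-- Verification of the alternative-parameter construction for a two-item
block: the constructed barred parameters satisfy the four moment equations. -/
theorem two_item_block_alternative_parameters
    (θ10 θ11 θ20 θ21 θb10 θb20 θb11 θb21 p0 p1 pb0 pb1 : ℝ)
    (hp0 : 0 < p0) (hp1 : 0 < p1)
    (hden2 : (θ20 - θb20) * p0 + (θ21 - θb20) * p1 ≠ 0)
    (hden1 : (θ10 - θb10) * p0 + (θ11 - θb10) * p1 ≠ 0)
    (hden3 : θb21 ≠ θb20)
    (hθb11 : θb11 = θ10 + (θ11 - θ10) * (θ21 - θb20) * p1 /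
        ((θ20 - θb20) * p0 + (θ21 - θb20) * p1))
    (hθb21 : θb21 = θ20 + (θ21 - θ20) * (θ11 - θb10) * p1 /
        ((θ10 - θb10) * p0 + (θ11 - θb10) * p1))
    (hpb1 : pb1 = ((θ20 - θb20) * p0 + (θ21 - θb20) * p1) / (θb21 - θb20))
    (hpb0 : pb0 = p0 + p1 - pb1) :
    p0 + p1 = pb0 + pb1
    ∧ θ10 * p0 + θ11 * p1 = θb10 * pb0 + θb11 * pb1
    ∧ θ20 * p0 + θ21 * p1 = θb20 * pb0 + θb21 * pb1
    ∧ θ10 * θ20 * p0 + θ11 * θ21 * p1 = θb10 * θb20 * pb0 + θb11 * θb21 * pb1 :=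
  two_item_block_alternative_parameters_general θ10 θ11 θ20 θ21 θb10 θb20 θb11 θb21 p0 p1 pb0 pb1
    hden2 hden1 hden3 hθb11 hθb21 hpb1 hpb0
end

section
/- Under the DINA model with a complete Q-matrix whose first K rows form I_K and whose every column has at least one additional 1 below row K (Condition C partial), for the response pattern r* = Σ_{h≠j} e_h (all items except a fixed item j > K) and the transformation θ* = Σ_{h≤K} ḡ_h e_h + Σ_{h>K, h≠j} g_h e_h, the transformed row vector T_{r*,·}(Q, c − θ*, g − θ*) has exactly one possibly-nonzero entry, at column α = 1 (the all-ones attribute profile), equal to Π_{h≤K}(c_h − ḡ_h) · Π_{h>K, h≠j}(c_h − g_h), provided ḡ_h ≠ c_h for all h ≤ K. -/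
/-!
Fix an attribute profile `α ≠ 1`, so some attribute `k` is missing from `α`. Attribute `k` is
required by at least three items; one of them is the identity-block item `k` and another may be
`j`, so some item `h > K`, `h ≠ j`, requires `k`. That item is not mastered under `α`, so its
parameter is `g h`, which is exactly what `θ*` subtracts from it: the factor of `h` vanishes.
At `α = 1` every item is mastered and the product splits into the identity block, where
`θ*` is `ḡ`, and the remaining items, where `θ*` is `g`.
-/

namespace Finset

theorem exists_mem_ne_ne_of_three_le_card {α : Type*} [DecidableEq α] {s : Finset α}
    (hs : 3 ≤ #s) (a b : α) : ∃ x ∈ s, x ≠ a ∧ x ≠ b := by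
  by_contra! h
  have hsub : s ⊆ {a, b} := fun x hx => by
    by_cases hxa : x = a
    · simp [hxa]
    · simp [h x hx hxa]
  have := (card_le_card hsub).trans (card_le_two (a := a) (b := b))
  omega

end Finset

namespace DINA

open Finset

variable {K M : ℕ} {Q : Fin (K + M) → Fin K → Bool}

theorem eq_castAdd_of_lt_of_requires
    (hIK : ∀ k k' : Fin K, Q (Fin.castAdd M k) k' = decide (k' = k))
    {h : Fin (K + M)} (hh : h.val < K) {k : Fin K} (hQ : Q h k = true) :
    h = Fin.castAdd M k := by
  have hcast : h = Fin.castAdd M ⟨h.val, hh⟩ := rfl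
  rw [hcast, hIK, decide_eq_true_iff] at hQ
  rw [hcast, hQ]

theorem exists_item_ge_ne_requiring
    (hIK : ∀ k k' : Fin K, Q (Fin.castAdd M k) k' = decide (k' = k))
    (hC : ∀ k : Fin K, 3 ≤ #(univ.filter (fun j : Fin (K + M) => Q j k = true)))
    (j : Fin (K + M)) (k : Fin K) :
    ∃ h : Fin (K + M), h ≠ j ∧ K ≤ h.val ∧ Q h k = true := by
  obtain ⟨h, hmem, hne_k, hne_j⟩ := exists_mem_ne_ne_of_three_le_card (hC k) (Fin.castAdd M k) j
  have hQ : Q h k = true := (mem_filter.mp hmem).2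
  exact ⟨h, hne_j, not_lt.mp fun hh => hne_k (eq_castAdd_of_lt_of_requires hIK hh hQ), hQ⟩

theorem prod_ne_eq_prod_castAdd_mul_prod_ge {R : Type*} [CommMonoid R]
    (f : Fin (K + M) → R) {j : Fin (K + M)} (hj : K ≤ j.val) :
    ∏ h ∈ univ.filter (fun h : Fin (K + M) => h ≠ j), f h
      = (∏ k : Fin K, f (Fin.castAdd M k))
        * ∏ h ∈ univ.filter (fun h : Fin (K + M) => K ≤ h.val ∧ h ≠ j), f h := by
  have hcast (k : Fin K) : Fin.castAdd M k ≠ j :=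
    Fin.ne_of_val_ne (by simp only [Fin.val_castAdd]; omega)
  simp [prod_filter, Fin.prod_univ_add, hcast, fun k : Fin K => not_le.mpr k.is_lt]

end DINA

open Finset DINA in
theorem dina_transformed_row_single_nonzero_entry_general
    (K M : ℕ) (Q : Fin (K + M) → Fin K → Bool)
    (hIK : ∀ k k' : Fin K, Q (Fin.castAdd M k) k' = decide (k' = k))
    (hC : ∀ k : Fin K,
      3 ≤ (Finset.univ.filter (fun j : Fin (K + M) => Q j k = true)).card)
    (c g : Fin (K + M) → ℝ) (gbar : Fin K → ℝ)
    (j : Fin (K + M)) (hj : K ≤ j.val) :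
    (∀ α : Fin K → Bool, α ≠ (fun _ => true) →
      ∏ h ∈ Finset.univ.filter (fun h : Fin (K + M) => h ≠ j),
        ((if ∀ k, Q h k = true → α k = true then c h else g h)
          - (if hK : h.val < K then gbar ⟨h.val, hK⟩ else g h)) = 0)
    ∧ ∏ h ∈ Finset.univ.filter (fun h : Fin (K + M) => h ≠ j),
        ((if ∀ k, Q h k = true → ((fun _ : Fin K => true) k = true) then c h else g h)
          - (if hK : h.val < K then gbar ⟨h.val, hK⟩ else g h))
      = (∏ k : Fin K, (c (Fin.castAdd M k) - gbar k))
        * ∏ h ∈ Finset.univ.filter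
            (fun h : Fin (K + M) => K ≤ h.val ∧ h ≠ j), (c h - g h) := by
  refine ⟨fun α hα => ?_, ?_⟩
  · obtain ⟨k, hk⟩ : ∃ k, α k = false := by
      by_contra! h
      exact hα (funext fun k => by simpa using h k)
    obtain ⟨h, hhj, hKh, hQ⟩ := exists_item_ge_ne_requiring hIK hC j k
    refine prod_eq_zero (i := h) (by simpa using hhj) ?_
    rw [if_neg fun hall => by simpa [hk] using hall k hQ, dif_neg (not_lt.mpr hKh), sub_self]
  · rw [prod_ne_eq_prod_castAdd_mul_prod_ge _ hj]
    congr 1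
    · refine prod_congr rfl fun k _ => ?_
      rw [if_pos fun _ _ => rfl, dif_pos (show (Fin.castAdd M k).val < K from k.is_lt)]
      rfl
    · refine prod_congr rfl fun h hh => ?_
      rw [if_pos fun _ _ => rfl, dif_neg (not_lt.mpr (mem_filter.mp hh).2.1)]

/-- Under the DINA model with Q = (I_K; Q*) and each column of Q containing at
least three 1's, the transformed T-row for the response pattern including all
items except a fixed item j > K vanishes at every attribute profile except the
all-ones profile, where it equals the stated product. -/
theorem dina_transformed_row_single_nonzero_entry
    (K M : ℕ) (Q : Fin (K + M) → Fin K → Bool)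
    (hIK : ∀ k k' : Fin K, Q (Fin.castAdd M k) k' = decide (k' = k))
    (hC : ∀ k : Fin K,
      3 ≤ (Finset.univ.filter (fun j : Fin (K + M) => Q j k = true)).card)
    (c g : Fin (K + M) → ℝ) (gbar : Fin K → ℝ)
    (hgbar : ∀ h : Fin K, gbar h ≠ c (Fin.castAdd M h))
    (j : Fin (K + M)) (hj : K ≤ j.val) :
    (∀ α : Fin K → Bool, α ≠ (fun _ => true) →
      ∏ h ∈ Finset.univ.filter (fun h : Fin (K + M) => h ≠ j),
        ((if ∀ k, Q h k = true → α k = true then c h else g h)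
          - (if hK : h.val < K then gbar ⟨h.val, hK⟩ else g h)) = 0)
    ∧ ∏ h ∈ Finset.univ.filter (fun h : Fin (K + M) => h ≠ j),
        ((if ∀ k, Q h k = true → ((fun _ : Fin K => true) k = true) then c h else g h)
          - (if hK : h.val < K then gbar ⟨h.val, hK⟩ else g h))
      = (∏ k : Fin K, (c (Fin.castAdd M k) - gbar k))
        * ∏ h ∈ Finset.univ.filter
            (fun h : Fin (K + M) => K ≤ h.val ∧ h ≠ j), (c h - g h) :=
  dina_transformed_row_single_nonzero_entry_general K M Q hIK hC c g gbar j hj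
end
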